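/- arXiv:1110.4847 — 2 statements merged into one kernel-verified Lean document; each statement's English description precedes it below -/
import Mathlib

section
/- For every integer n ≥ 1, the following identity holds in the field ℚ(q) of rational functions in one variable q over ℚ: q^{n(n-1)/2}/((q^n-1)(q^n-q)···(q^n-q^{n-1})) = ∑_{m ⊢ n} ∏_{l≥1} (1/m_l!) · ((-1)^{l-1}/(l·[l]_q))^{m_l} · (q-1)^{-∑_{l≥1} m_l}, where [l]_q = (q^l-1)/(q-1) and the sum ranges over all multiplicity vectors m with ∑_{l≥1} l·m_l = n. -/
/-!
Write `P n = ∏_{j=1}^n (q^j - 1)`; the left-hand side is `1 / P n`. Absorbing `(q-1)^{-∑ m_l}`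
into the factors, the right-hand side is the coefficient of `tⁿ` in `exp (∑ a_l t^l)` with
`a_l = (-1)^{l-1} / (l (q^l - 1))`. Differentiating the exponential, these coefficients `F n` obey
`n F n = ∑_{i+j=n} i a_i F j`, a recurrence which, since `n` is invertible, determines `F` from
`F 0 = 1`. It remains to check that `1 / P n` satisfies it, which follows by induction from
`(q^n - 1) / P n = 1 / P (n-1)`, the `q`-difference equation `G(qt) = (1+t) G(t)` of their
generating function.
-/

open Finset

theorem eq_of_natCast_mul_eq_sum_antidiagonal {R : Type*} [CommRing R] [IsDomain R] [CharZero R]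
    {c y z : ℕ → R} (hc : c 0 = 0) (h0 : y 0 = z 0)
    (hy : ∀ n : ℕ, (n : R) * y n = ∑ p ∈ antidiagonal n, c p.1 * y p.2)
    (hz : ∀ n : ℕ, (n : R) * z n = ∑ p ∈ antidiagonal n, c p.1 * z p.2) : y = z := by
  funext n
  induction n using Nat.strong_induction_on with
  | _ n ih =>
    rcases n with _ | n
    · exact h0
    refine mul_left_cancel₀ (Nat.cast_ne_zero.2 n.succ_ne_zero) ?_
    rw [hy, hz, Nat.sum_antidiagonal_succ, Nat.sum_antidiagonal_succ, hc, zero_mul, zero_mul]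
    refine congrArg _ (sum_congr rfl fun p hp => ?_)
    rw [ih p.2 (Nat.antidiagonal.snd_lt hp)]

section MultiplicityWeight

variable {K : Type*} [Field K] (a : ℕ → K)

def multiplicityWeight (s : Multiset ℕ) : K :=
  ∏ l ∈ s.toFinset, 1 / ((s.count l).factorial : K) * a l ^ s.count l

/-- The coefficient of `tⁿ` in `exp (∑ₗ a l * tˡ)`. -/
def expCoeff (n : ℕ) : K :=
  ∑ μ : n.Partition, multiplicityWeight a μ.parts

theorem multiplicityWeight_eq_prod_of_subset {s : Multiset ℕ} {I : Finset ℕ}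
    (hI : s.toFinset ⊆ I) :
    multiplicityWeight a s = ∏ l ∈ I, 1 / ((s.count l).factorial : K) * a l ^ s.count l := by
  refine prod_subset hI fun l _ hl => ?_
  simp [Multiset.count_eq_zero.2 (Multiset.mem_toFinset.not.1 hl)]

variable [CharZero K]

theorem count_mul_multiplicityWeight_cons (l : ℕ) (s : Multiset ℕ) :
    ((l ::ₘ s).count l : K) * multiplicityWeight a (l ::ₘ s) = a l * multiplicityWeight a s := by
  classical
  set I := insert l s.toFinset
  have hl : l ∈ I := mem_insert_self l _
  rw [multiplicityWeight_eq_prod_of_subset a (Multiset.toFinset_cons l s).le,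
    multiplicityWeight_eq_prod_of_subset a (subset_insert l _),
    ← mul_prod_erase I _ hl, ← mul_prod_erase I _ hl,
    prod_congr rfl fun k hk => by rw [Multiset.count_cons_of_ne (ne_of_mem_erase hk)],
    Multiset.count_cons_self, Nat.factorial_succ]
  have hfact : (s.count l).factorial ≠ 0 := Nat.factorial_ne_zero _
  push_cast
  field_simp
  ring

theorem sum_count_mul_multiplicityWeight {n l : ℕ} (hl : 1 ≤ l) (hln : l ≤ n) :
    ∑ μ : n.Partition, (μ.parts.count l : K) * multiplicityWeight a μ.parts =
      a l * expCoeff a (n - l) := by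
  classical
  rw [← Fintype.sum_subtype_add_sum_subtype (fun μ : n.Partition => l ∈ μ.parts),
    Fintype.sum_eq_zero (fun μ : {μ : n.Partition // l ∉ μ.parts} => _)
      fun μ => by simp [Multiset.count_eq_zero.2 μ.2],
    add_zero, expCoeff, mul_sum]
  refine Fintype.sum_equiv (Nat.Partition.partitionWithPartEquiv hl hln) _ _ fun μ => ?_
  simp only [Nat.Partition.partitionWithPartEquiv_apply_parts]
  rw [← count_mul_multiplicityWeight_cons, Multiset.cons_erase μ.2]

theorem expCoeff_zero : expCoeff a 0 = 1 := by
  simp [expCoeff, multiplicityWeight]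

theorem natCast_mul_expCoeff (n : ℕ) :
    n * expCoeff a n = ∑ p ∈ antidiagonal n, p.1 * a p.1 * expCoeff a p.2 := by
  classical
  have hsum (μ : n.Partition) : (n : K) = ∑ l ∈ range (n + 1), (l : K) * μ.parts.count l := by
    have hsub : μ.parts.toFinset ⊆ range (n + 1) := fun l hl =>
      mem_range_succ_iff.2 (Nat.Partition.le_of_mem_parts (Multiset.mem_toFinset.1 hl))
    have h := congrArg (Nat.cast (R := K)) (sum_multiset_count_of_subset _ _ hsub)
    rw [μ.parts_sum] at h
    rw [h, Nat.cast_sum]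
    exact sum_congr rfl fun l _ => by rw [smul_eq_mul, Nat.cast_mul, mul_comm]
  have hterm (l : ℕ) (hl : l ∈ range (n + 1)) :
      (l : K) * ∑ μ : n.Partition, μ.parts.count l * multiplicityWeight a μ.parts =
        l * a l * expCoeff a (n - l) := by
    rcases Nat.eq_zero_or_pos l with rfl | hl0
    · simp
    rw [sum_count_mul_multiplicityWeight a hl0 (mem_range_succ_iff.1 hl), mul_assoc]
  calc (n : K) * expCoeff a n
      = ∑ μ : n.Partition, ∑ l ∈ range (n + 1),
          (l : K) * (μ.parts.count l * multiplicityWeight a μ.parts) := by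
        rw [expCoeff, mul_sum]
        refine sum_congr rfl fun μ _ => ?_
        rw [hsum μ, sum_mul]
        exact sum_congr rfl fun l _ => mul_assoc _ _ _
    _ = ∑ l ∈ range (n + 1), l * a l * expCoeff a (n - l) := by
        rw [sum_comm]
        exact sum_congr rfl fun l hl => by rw [← mul_sum, hterm l hl]
    _ = _ :=
        (Nat.sum_antidiagonal_eq_sum_range_succ (fun i j => (i : K) * a i * expCoeff a j) n).symm

end MultiplicityWeight

section PowSubOne

variable {K : Type*} [Field K] (q : K)

def prodPowSubOne (n : ℕ) : K := ∏ i ∈ range n, (q ^ (i + 1) - 1)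

theorem prod_range_pow_sub_pow (n : ℕ) :
    ∏ i ∈ range n, (q ^ n - q ^ i) = q ^ (n * (n - 1) / 2) * prodPowSubOne q n := by
  have hfactor (i : ℕ) (hi : i ∈ range n) : q ^ n - q ^ i = q ^ i * (q ^ (n - 1 - i + 1) - 1) := by
    rw [mul_sub, mul_one, ← pow_add]
    congr 2
    have := mem_range.1 hi
    omega
  rw [prod_congr rfl hfactor, prod_mul_distrib, prod_pow_eq_pow_sum, sum_range_id, prodPowSubOne,
    prod_range_reflect (fun i => q ^ (i + 1) - 1)]

variable {q} (hq : ¬IsOfFinOrder q)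
include hq

theorem pow_succ_sub_one_ne_zero (n : ℕ) : q ^ (n + 1) - 1 ≠ 0 :=
  sub_ne_zero.2 fun h => hq (isOfFinOrder_iff_pow_eq_one.2 ⟨n + 1, n.succ_pos, h⟩)

theorem pow_succ_sub_one_mul_inv_prodPowSubOne_succ (n : ℕ) :
    (q ^ (n + 1) - 1) * (prodPowSubOne q (n + 1))⁻¹ = (prodPowSubOne q n)⁻¹ := by
  rw [prodPowSubOne, prod_range_succ, mul_inv, ← prodPowSubOne, mul_left_comm,
    mul_inv_cancel₀ (pow_succ_sub_one_ne_zero hq n), mul_one]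

theorem sum_antidiagonal_neg_one_pow_mul_inv_prodPowSubOne (n : ℕ) :
    ∑ p ∈ antidiagonal n, (-1) ^ p.1 * (q ^ p.2 * (prodPowSubOne q p.2)⁻¹) =
      (prodPowSubOne q n)⁻¹ := by
  induction n with
  | zero => simp [prodPowSubOne]
  | succ n ih =>
    rw [Nat.sum_antidiagonal_succ]
    simp only [pow_succ (-1 : K), mul_neg_one, neg_mul, sum_neg_distrib, ih]
    linear_combination pow_succ_sub_one_mul_inv_prodPowSubOne_succ hq n

/- For `i + j = n + 1`, split `q ^ (n + 1) - 1 = (q ^ i - 1) * q ^ j + (q ^ j - 1)`: the second part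
shifts the sum down to `n`, the first is an alternating sum that telescopes. -/
theorem pow_succ_sub_one_mul_sum_antidiagonal (n : ℕ) :
    (q ^ (n + 1) - 1) *
        ∑ p ∈ antidiagonal (n + 1), (-1) ^ (p.1 - 1) / (q ^ p.1 - 1) * (prodPowSubOne q p.2)⁻¹ =
      ∑ p ∈ antidiagonal n, (-1) ^ (p.1 - 1) / (q ^ p.1 - 1) * (prodPowSubOne q p.2)⁻¹ +
        (prodPowSubOne q n)⁻¹ := by
  set c : ℕ → K := fun i => (-1) ^ (i - 1) / (q ^ i - 1)
  set G : ℕ → K := fun j => (prodPowSubOne q j)⁻¹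
  have hsplit (p : ℕ × ℕ) (hp : p ∈ antidiagonal (n + 1)) :
      (q ^ (n + 1) - 1) * (c p.1 * G p.2) =
        c p.1 * (q ^ p.1 - 1) * (q ^ p.2 * G p.2) + c p.1 * ((q ^ p.2 - 1) * G p.2) := by
    rw [← mem_antidiagonal.1 hp, pow_add]
    ring
  have hc (i : ℕ) : c (i + 1) * (q ^ (i + 1) - 1) = (-1) ^ i := by
    simp only [c, Nat.add_sub_cancel]
    exact div_mul_cancel₀ _ (pow_succ_sub_one_ne_zero hq i)
  rw [mul_sum, sum_congr rfl hsplit, sum_add_distrib, Nat.sum_antidiagonal_succ,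
    Nat.sum_antidiagonal_succ' (f := fun p => c p.1 * ((q ^ p.2 - 1) * G p.2))]
  simp only [hc, pow_zero, sub_self, mul_zero, zero_mul, zero_add,
    pow_succ_sub_one_mul_inv_prodPowSubOne_succ hq, G]
  rw [sum_antidiagonal_neg_one_pow_mul_inv_prodPowSubOne hq, add_comm]

-- The `p.1 = 0` term vanishes because `q ^ 0 - 1 = 0` and division by zero returns zero.
theorem natCast_mul_inv_prodPowSubOne (n : ℕ) :
    n * (prodPowSubOne q n)⁻¹ =
      ∑ p ∈ antidiagonal n, (-1) ^ (p.1 - 1) / (q ^ p.1 - 1) * (prodPowSubOne q p.2)⁻¹ := by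
  induction n with
  | zero => simp
  | succ n ih =>
    refine mul_left_cancel₀ (pow_succ_sub_one_ne_zero hq n) ?_
    rw [pow_succ_sub_one_mul_sum_antidiagonal hq, ← ih, mul_left_comm,
      pow_succ_sub_one_mul_inv_prodPowSubOne_succ hq]
    push_cast
    ring

end PowSubOne

theorem expCoeff_eq_inv_prodPowSubOne {K : Type*} [Field K] [CharZero K] {q : K}
    (hq : ¬IsOfFinOrder q) (n : ℕ) :
    expCoeff (fun l => (-1) ^ (l - 1) / (l * (q ^ l - 1))) n = (prodPowSubOne q n)⁻¹ := by
  have hcoeff (i : ℕ) : (i : K) * ((-1) ^ (i - 1) / (i * (q ^ i - 1))) =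
      (-1) ^ (i - 1) / (q ^ i - 1) := by
    rcases eq_or_ne i 0 with rfl | hi
    · simp
    rw [mul_div_assoc', mul_div_mul_left _ _ (Nat.cast_ne_zero.2 hi)]
  refine congrFun (eq_of_natCast_mul_eq_sum_antidiagonal
    (c := fun i => (-1) ^ (i - 1) / (q ^ i - 1)) (by simp) ?_ (fun m => ?_)
    (natCast_mul_inv_prodPowSubOne hq)) n
  · simp [expCoeff_zero, prodPowSubOne]
  · simp only [natCast_mul_expCoeff, hcoeff]

theorem RatFunc.not_isOfFinOrder_X (K : Type*) [Field K] :
    ¬IsOfFinOrder (RatFunc.X : RatFunc K) := by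
  rintro h
  obtain ⟨n, hn, hXn⟩ := isOfFinOrder_iff_pow_eq_one.1 h
  refine Polynomial.X_pow_sub_C_ne_zero hn (1 : K) (RatFunc.algebraMap_injective K ?_)
  simp [hXn]

theorem multiplicityWeight_eq_prod_mul_zpow {K : Type*} [Field K] {q : K} (hq : q ≠ 1) {n : ℕ}
    (μ : n.Partition) :
    multiplicityWeight (fun l => (-1) ^ (l - 1) / (l * (q ^ l - 1))) μ.parts =
      (∏ l ∈ Icc 1 n, 1 / ((μ.parts.count l).factorial : K) *
          ((-1) ^ (l - 1) / (l * ((q ^ l - 1) / (q - 1)))) ^ μ.parts.count l) *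
        (q - 1) ^ (-(∑ l ∈ Icc 1 n, (μ.parts.count l : ℤ))) := by
  have hsub : μ.parts.toFinset ⊆ Icc 1 n := fun l hl =>
    mem_Icc.2 ⟨μ.parts_pos (Multiset.mem_toFinset.1 hl),
      Nat.Partition.le_of_mem_parts (Multiset.mem_toFinset.1 hl)⟩
  have hq' : q - 1 ≠ 0 := sub_ne_zero.2 hq
  rw [multiplicityWeight_eq_prod_of_subset _ hsub, ← Nat.cast_sum, zpow_neg, zpow_natCast,
    ← prod_pow_eq_pow_sum, ← prod_inv_distrib, ← prod_mul_distrib]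
  refine prod_congr rfl fun l _ => ?_
  rw [← inv_pow, mul_assoc, ← mul_pow]
  congr 2
  field_simp

theorem motivic_specialization_general (n : ℕ) :
    (RatFunc.X : RatFunc ℚ) ^ (n * (n - 1) / 2) /
        ∏ i ∈ Finset.range n,
          ((RatFunc.X : RatFunc ℚ) ^ n - (RatFunc.X : RatFunc ℚ) ^ i) =
      ∑ μ : Nat.Partition n,
        (∏ l ∈ Finset.Icc 1 n,
            (1 / ((μ.parts.count l).factorial : RatFunc ℚ)) *
              ((-1) ^ (l - 1) /
                  ((l : RatFunc ℚ) *
                    (((RatFunc.X : RatFunc ℚ) ^ l - 1) /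
                      ((RatFunc.X : RatFunc ℚ) - 1)))) ^ (μ.parts.count l)) *
          ((RatFunc.X : RatFunc ℚ) - 1) ^ (-(∑ l ∈ Finset.Icc 1 n, (μ.parts.count l : ℤ))) := by
  have hX := RatFunc.not_isOfFinOrder_X ℚ
  rw [prod_range_pow_sub_pow, div_mul_cancel_left₀ (pow_ne_zero _ RatFunc.X_ne_zero),
    ← expCoeff_eq_inv_prodPowSubOne hX]
  have hX1 : (RatFunc.X : RatFunc ℚ) ≠ 1 := fun h => hX (h ▸ IsOfFinOrder.one)
  exact sum_congr rfl fun μ _ => multiplicityWeight_eq_prod_mul_zpow hX1 μ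

/-- **MPS paper, Lemma 3.3.** In the field `ℚ(q)` of rational functions, for every
`n ≥ 1`:
`q^{n(n-1)/2}/((qⁿ-1)(qⁿ-q)⋯(qⁿ-q^{n-1}))
   = ∑_{m ⊢ n} ∏_{l ≥ 1} (1/m_l!)((-1)^{l-1}/(l·[l]_q))^{m_l} · (q-1)^{-∑_l m_l}`,
where `[l]_q = (q^l-1)/(q-1)` and the sum is over multiplicity vectors `m` with
`∑ l·m_l = n`, encoded as partitions `μ` of `n` via `m_l = μ.parts.count l`. -/
theorem motivic_specialization (n : ℕ) (hn : 1 ≤ n) :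
    (RatFunc.X : RatFunc ℚ) ^ (n * (n - 1) / 2) /
        ∏ i ∈ Finset.range n,
          ((RatFunc.X : RatFunc ℚ) ^ n - (RatFunc.X : RatFunc ℚ) ^ i) =
      ∑ μ : Nat.Partition n,
        (∏ l ∈ Finset.Icc 1 n,
            (1 / ((μ.parts.count l).factorial : RatFunc ℚ)) *
              ((-1) ^ (l - 1) /
                  ((l : RatFunc ℚ) *
                    (((RatFunc.X : RatFunc ℚ) ^ l - 1) /
                      ((RatFunc.X : RatFunc ℚ) - 1)))) ^ (μ.parts.count l)) *
          ((RatFunc.X : RatFunc ℚ) - 1) ^ (-(∑ l ∈ Finset.Icc 1 n, (μ.parts.count l : ℤ))) :=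
  motivic_specialization_general n
end

section
/- Let w ≥ 1 and let (d_i, e_i)_{i=1,...,n} be a w-admissible decomposition of (d, e). Let t_1,...,t_n and s_1,...,s_n be rational numbers such that 0 ≤ t_i ≤ d_i and d_i · s_i ≥ e_i · t_i for all i, and such that t_j < d_j for at least one index j. Then (w + ∑_{i=1}^n s_i) · (∑_{i=1}^n d_i) > (w + ∑_{i=1}^n e_i) · (∑_{i=1}^n t_i); equivalently, w + ∑_{i=1}^n s_i > ((w + ∑_{i=1}^n e_i)/(∑_{i=1}^n d_i)) · ∑_{i=1}^n t_i. (This is the key inequality establishing the stability of the quiver data glued from semistable data of dimension types (d_i, e_i) along a new sink of level w.) -/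
open Finset

/-!
Write `D = ∑ dᵢ` and `E = w + ∑ eᵢ`. Admissibility, propagated along the increasing slopes,
says that every slope lies strictly below the total one: `eᵢ D < E dᵢ`. Multiplying
`dᵢ sᵢ ≥ eᵢ tᵢ` by `D / dᵢ` and using `tᵢ ≤ dᵢ` against the positive weight `E dᵢ - D eᵢ` gives
`E tᵢ - D sᵢ ≤ E dᵢ - D eᵢ`, strictly when `tᵢ < dᵢ`. The right-hand sides add up to `w D`.
-/

section LinearOrderedField

variable {K : Type*} [Field K] [LinearOrder K] [IsStrictOrderedRing K]

lemma mul_sub_mul_le_mul_sub_mul {E D d e t s : K} (hD : 0 ≤ D) (hs : e * t ≤ d * s) :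
    d * (E * t - D * s) ≤ t * (E * d - D * e) := by
  nlinarith [mul_le_mul_of_nonneg_left hs hD]

lemma mul_sub_mul_le_of_slope_lt {E D d e t s : K} (hd : 0 < d) (hD : 0 ≤ D)
    (hslope : e * D < E * d) (ht : t ≤ d) (hs : e * t ≤ d * s) :
    E * t - D * s ≤ E * d - D * e := by
  refine le_of_mul_le_mul_left ?_ hd
  calc d * (E * t - D * s) ≤ t * (E * d - D * e) := mul_sub_mul_le_mul_sub_mul hD hs
    _ ≤ d * (E * d - D * e) := mul_le_mul_of_nonneg_right ht (by linarith)

lemma mul_sub_mul_lt_of_slope_lt {E D d e t s : K} (hd : 0 < d) (hD : 0 ≤ D)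
    (hslope : e * D < E * d) (ht : t < d) (hs : e * t ≤ d * s) :
    E * t - D * s < E * d - D * e := by
  refine lt_of_mul_lt_mul_left ?_ hd.le
  calc d * (E * t - D * s) ≤ t * (E * d - D * e) := mul_sub_mul_le_mul_sub_mul hD hs
    _ < d * (E * d - D * e) := mul_lt_mul_of_pos_right ht (by linarith)

theorem add_sum_mul_sum_lt_of_slope_lt {ι : Type*} {S : Finset ι} {w : K} {d e t s : ι → K}
    (hd : ∀ i ∈ S, 0 < d i)
    (hslope : ∀ i ∈ S, e i * ∑ k ∈ S, d k < (w + ∑ k ∈ S, e k) * d i)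
    (htd : ∀ i ∈ S, t i ≤ d i) (hs : ∀ i ∈ S, e i * t i ≤ d i * s i)
    (hstrict : ∃ j ∈ S, t j < d j) :
    (w + ∑ i ∈ S, e i) * ∑ i ∈ S, t i < (w + ∑ i ∈ S, s i) * ∑ i ∈ S, d i := by
  set D := ∑ i ∈ S, d i
  set E := w + ∑ i ∈ S, e i
  have hD : 0 ≤ D := sum_nonneg fun i hi => (hd i hi).le
  have hsum : ∑ i ∈ S, (E * t i - D * s i) < ∑ i ∈ S, (E * d i - D * e i) := by
    obtain ⟨j, hj, htj⟩ := hstrict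
    refine sum_lt_sum (fun i hi => ?_) ⟨j, hj, ?_⟩
    · exact mul_sub_mul_le_of_slope_lt (hd i hi) hD (hslope i hi) (htd i hi) (hs i hi)
    · exact mul_sub_mul_lt_of_slope_lt (hd j hj) hD (hslope j hj) htj (hs j hj)
  simp only [sum_sub_distrib, ← mul_sum] at hsum
  linarith

variable {n : ℕ} {d e : ℕ → K}

lemma slope_le_of_le (hd : ∀ i < n, 0 < d i)
    (hmono : ∀ i, i + 1 < n → e i * d (i + 1) ≤ e (i + 1) * d i)
    {i j : ℕ} (hij : i ≤ j) (hjn : j < n) : e i * d j ≤ e j * d i := by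
  have hslope : ∀ j, i ≤ j → j < n → e i / d i ≤ e j / d j := by
    intro j hij
    induction j, hij using Nat.le_induction with
    | base => exact fun _ => le_rfl
    | succ j _ ih =>
      intro hj
      exact (ih (by omega)).trans
        ((div_le_div_iff₀ (hd j (by omega)) (hd (j + 1) hj)).2 (hmono j hj))
  exact (div_le_div_iff₀ (hd i (by omega)) (hd j hjn)).1 (hslope j hij hjn)

lemma slope_lt_total_slope {w : K} (hd : ∀ i < n, 0 < d i)
    (hmono : ∀ i, i + 1 < n → e i * d (i + 1) ≤ e (i + 1) * d i)
    (hadm : ∀ k < n, e k * ∑ i ∈ range k, d i < (w + ∑ i ∈ range k, e i) * d k) :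
    ∀ i < n, e i * ∑ k ∈ range n, d k < (w + ∑ k ∈ range n, e k) * d i := by
  suffices ∀ m ≤ n, ∀ i < m, e i * ∑ k ∈ range m, d k < (w + ∑ k ∈ range m, e k) * d i from
    this n le_rfl
  intro m
  induction m with
  | zero => simp
  | succ m ih =>
    intro hm i hi
    rw [sum_range_succ, sum_range_succ, ← add_assoc]
    rcases Nat.lt_succ_iff_lt_or_eq.1 hi with hi | rfl
    · have hprefix := ih (by omega) i hi
      have hchain := slope_le_of_le hd hmono hi.le hm
      linarith
    · have := hadm i hm
      linarith

end LinearOrderedField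

theorem glued_data_stability_general (n : ℕ) (w : ℕ) (hw : 1 ≤ w) (d e : ℕ → ℕ)
    (hd : ∀ i < n, 0 < d i)
    (hmono : ∀ i, i + 1 < n → e i * d (i + 1) ≤ e (i + 1) * d i)
    (hadm : ∀ k, 1 ≤ k → k < n →
      e k * ∑ i ∈ Finset.range k, d i < (w + ∑ i ∈ Finset.range k, e i) * d k)
    (t s : ℕ → ℚ)
    (htd : ∀ i < n, t i ≤ (d i : ℚ))
    (hs : ∀ i < n, (e i : ℚ) * t i ≤ (d i : ℚ) * s i)
    (hstrict : ∃ j < n, t j < (d j : ℚ)) :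
    ((w : ℚ) + ∑ i ∈ Finset.range n, (e i : ℚ)) * ∑ i ∈ Finset.range n, t i <
      ((w : ℚ) + ∑ i ∈ Finset.range n, s i) * ∑ i ∈ Finset.range n, (d i : ℚ) := by
  have hdQ : ∀ i < n, (0 : ℚ) < d i := fun i hi => by exact_mod_cast hd i hi
  -- At `k = 0` the admissibility condition reads `0 < w * d₀`.
  have hadmQ : ∀ k < n, (e k : ℚ) * ∑ i ∈ range k, (d i : ℚ) <
      ((w : ℚ) + ∑ i ∈ range k, (e i : ℚ)) * d k := by
    intro k hk
    rcases Nat.eq_zero_or_pos k with rfl | hk0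
    · simpa using mul_pos (by exact_mod_cast hw : (0 : ℚ) < w) (hdQ 0 hk)
    · exact_mod_cast hadm k hk0 hk
  have hmonoQ : ∀ i, i + 1 < n → (e i : ℚ) * d (i + 1) ≤ e (i + 1) * d i :=
    fun i hi => by exact_mod_cast hmono i hi
  have hslope := slope_lt_total_slope hdQ hmonoQ hadmQ
  simp only [← Finset.mem_range] at hdQ hslope htd hs hstrict
  exact add_sum_mul_sum_lt_of_slope_lt hdQ hslope htd hs hstrict

/-- **MPS paper, key inequality in the proof of Theorem 6.4 (stability of glued quiver
data).** Let `w ≥ 1` and let `(d_i, e_i)_{i=1,…,n}` (here indexed by `i = 0,…,n-1`) be a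
`w`-admissible decomposition: all `d_i > 0`, the slopes `e_i/d_i` weakly increase, and
`(w + ∑_{i=1}^k e_i)/(∑_{i=1}^k d_i) > e_{k+1}/d_{k+1}` for `k = 1,…,n-1`. Let
`t_1,…,t_n` and `s_1,…,s_n` be rational numbers with `0 ≤ t_i ≤ d_i` and
`d_i·s_i ≥ e_i·t_i` for all `i`, and `t_j < d_j` for at least one `j`. Then
`(w + ∑_i s_i)·(∑_i d_i) > (w + ∑_i e_i)·(∑_i t_i)`. -/
theorem glued_data_stability (n : ℕ) (hn : 1 ≤ n) (w : ℕ) (hw : 1 ≤ w) (d e : ℕ → ℕ)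
    (hd : ∀ i < n, 0 < d i)
    (hmono : ∀ i, i + 1 < n → e i * d (i + 1) ≤ e (i + 1) * d i)
    (hadm : ∀ k, 1 ≤ k → k < n →
      e k * ∑ i ∈ Finset.range k, d i < (w + ∑ i ∈ Finset.range k, e i) * d k)
    (t s : ℕ → ℚ)
    (ht0 : ∀ i < n, 0 ≤ t i) (htd : ∀ i < n, t i ≤ (d i : ℚ))
    (hs : ∀ i < n, (e i : ℚ) * t i ≤ (d i : ℚ) * s i)
    (hstrict : ∃ j < n, t j < (d j : ℚ)) :
    ((w : ℚ) + ∑ i ∈ Finset.range n, (e i : ℚ)) * ∑ i ∈ Finset.range n, t i <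
      ((w : ℚ) + ∑ i ∈ Finset.range n, s i) * ∑ i ∈ Finset.range n, (d i : ℚ) :=
  glued_data_stability_general n w hw d e hd hmono hadm t s htd hs hstrict
end
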